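/- Let X_1, ..., X_n be real random variables satisfying the PDS condition: E[φ(X_1, ..., X_n) | X_i = x] is nondecreasing in x for each i and every bounded coordinatewise nondecreasing φ. Let F_i be the (continuous) CDF of X_i, and let a_1 ≤ ... ≤ a_n be reals such that F_i(a_j)/j is nondecreasing in j = 1, ..., n for every i. Then P(X_{1:n} ≥ a_1, ..., X_{n:n} ≥ a_n) ≥ 1 − (1/n) Σ_{i=1}^n F_i(a_n). -/

import Mathlib

/-!
Count positions from `0`, as `ordStat` does, and let `G k` be the event that `X_{j:n} ≥ a_j` for
every position `j ≥ k`; so `G 0` is the event of the theorem and `G n` is everything. Each `G k`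
is an increasing event, so by PDS `P(G k | X_i) = g(X_i)` with `g` nondecreasing. Averaging `g`
over `{X_i ≤ s}` and over `{s < X_i ≤ t}` turns the ratio condition on the `F_i(a_j)/(j+1)` into
`P(X_i ≤ a_{k-1}, G k)/k ≤ P(X_i ≤ a_k, G k)/(k+1)`.
On `G (k+1) \ G k` the order statistic `X_{k:n}` lies below `a_k`, so at least `k+1` of the
`X_i` do, and `P(G (k+1) \ G k) ≤ (1/(k+1)) Σ_i P(X_i ≤ a_k, G (k+1) \ G k)`. Summed over `k`,
these terms telescope for each `i`, by the previous inequality, to at most `F_i(a_{n-1})/n`.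
-/

open MeasureTheory

/-- `ordStat x i` is the `i`-th smallest value among `x 0, ..., x (n-1)`. -/
noncomputable def ordStat {n : ℕ} (x : Fin n → ℝ) : Fin n → ℝ :=
  x ∘ Tuple.sort x

open Finset ProbabilityTheory

section OrderStatistics

variable {n : ℕ}

lemma ordStat_monotone (x : Fin n → ℝ) : Monotone (ordStat x) :=
  Tuple.monotone_sort x

lemma card_filter_ordStat (x : Fin n → ℝ) (p : ℝ → Prop) [DecidablePred p] :
    #{j | p (ordStat x j)} = #{i | p (x i)} := by
  simp only [card_filter]
  exact Equiv.sum_comp (Tuple.sort x) fun i => if p (x i) then 1 else 0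

lemma ordStat_lt_iff (x : Fin n → ℝ) (j : Fin n) (t : ℝ) :
    ordStat x j < t ↔ (j : ℕ) < #{i | x i < t} := by
  rw [← card_filter_ordStat x (· < t)]
  constructor
  · intro h
    calc (j : ℕ) < #(Iic j) := by simp
      _ ≤ _ := card_le_card fun j' hj' => by
        simpa using (ordStat_monotone x (mem_Iic.1 hj')).trans_lt h
  · contrapose!
    intro ht
    calc #{j' | ordStat x j' < t} ≤ #(Iio j) := card_le_card fun j' hj' => by
          simp only [mem_filter, mem_univ, true_and] at hj'
          exact mem_Iio.2 (lt_of_not_ge fun hjj' => (ht.trans (ordStat_monotone x hjj')).not_gt hj')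
      _ = j := by simp

lemma monotone_ordStat : Monotone (ordStat : (Fin n → ℝ) → Fin n → ℝ) := by
  intro x y hxy j
  by_contra! h
  have hy := (ordStat_lt_iff y j _).1 h
  refine lt_irrefl (ordStat x j) ((ordStat_lt_iff x j _).2 (hy.trans_le (card_le_card ?_)))
  intro i
  simpa using fun hi => (hxy i).trans_lt hi

lemma measurable_ordStat (j : Fin n) : Measurable fun x : Fin n → ℝ => ordStat x j := by
  refine measurable_of_Iio fun t => ?_
  have hcard : Measurable fun x : Fin n → ℝ => #{i | x i < t} := by
    simp only [card_filter]
    exact Finset.measurable_sum _ fun i _ => Measurable.ite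
      (measurableSet_lt (measurable_pi_apply i) measurable_const) measurable_const measurable_const
  simpa [Set.preimage, ordStat_lt_iff] using hcard measurableSet_Ioi

end OrderStatistics

section SimesSet

variable {n : ℕ}

def simesSet (a : Fin n → ℝ) (k : ℕ) : Set (Fin n → ℝ) :=
  {x | ∀ j : Fin n, k ≤ (j : ℕ) → a j ≤ ordStat x j}

variable (a : Fin n → ℝ)

lemma isUpperSet_simesSet (k : ℕ) : IsUpperSet (simesSet a k) :=
  fun _ _ hxy hx j hj => (hx j hj).trans (monotone_ordStat hxy j)

lemma measurableSet_simesSet (k : ℕ) : MeasurableSet (simesSet a k) :=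
  measurableSet_setOfPred.2 <| Measurable.forall fun j => Measurable.imp measurable_const <|
    measurableSet_setOfPred.1 (measurableSet_le measurable_const (measurable_ordStat j))

lemma simesSet_mono : Monotone (simesSet a) :=
  fun _ _ hkk' _ hx j hj => hx j (hkk'.trans hj)

lemma simesSet_of_le {k : ℕ} (hk : n ≤ k) : simesSet a k = Set.univ :=
  Set.eq_univ_of_forall fun _ j hj => absurd j.isLt (by omega)

lemma lt_card_of_mem_simesSet_succ_sdiff {x : Fin n → ℝ} {j : Fin n}
    (hx : x ∈ simesSet a (j + 1) \ simesSet a j) : (j : ℕ) < #{i | x i < a j} := by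
  refine (ordStat_lt_iff x j _).1 (lt_of_not_ge fun hj => hx.2 fun j' hj' => ?_)
  rcases hj'.eq_or_lt with h | h
  · rwa [← Fin.ext h]
  · exact hx.1 j' h

end SimesSet

lemma IsUpperSet.monotone_indicator_one {α : Type*} [Preorder α] {s : Set α} (hs : IsUpperSet s) :
    Monotone (s.indicator (1 : α → ℝ)) := by
  intro x y hxy
  by_cases hx : x ∈ s
  · simp [hx, hs hxy hx]
  · simp only [Set.indicator_of_notMem hx]
    exact Set.indicator_nonneg (fun _ _ => zero_le_one) y

section Probability

variable {Ω : Type*} [MeasurableSpace Ω] {μ : Measure Ω}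

open scoped Classical in
lemma natCast_mul_measureReal_le_sum [IsFiniteMeasure μ] {ι : Type*} [Fintype ι]
    {A : ι → Set Ω} (hA : ∀ i, MeasurableSet (A i)) {E : Set Ω} {m : ℕ}
    (hE : ∀ ω ∈ E, m ≤ #{i | ω ∈ A i}) :
    m * μ.real E ≤ ∑ i, μ.real (A i ∩ E) := by
  have h : (m : ENNReal) * μ E ≤ ∑ i, μ (A i ∩ E) :=
    calc (m : ENNReal) * μ E = ∫⁻ _ in E, (m : ENNReal) ∂μ := (setLIntegral_const E _).symm
      _ ≤ ∫⁻ ω in E, ∑ i, (A i).indicator 1 ω ∂μ :=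
        setLIntegral_mono (Finset.measurable_sum _ fun i _ => measurable_one.indicator (hA i))
          fun ω hω => by simpa [Set.indicator_apply] using hE ω hω
      _ = ∑ i, μ (A i ∩ E) := by
        rw [lintegral_finsetSum _ fun i _ => measurable_one.indicator (hA i)]
        simp [lintegral_indicator_one (hA _), Measure.restrict_apply (hA _)]
  simpa [measureReal_def, ENNReal.toReal_sum] using
    ENNReal.toReal_mono (ENNReal.sum_ne_top.2 fun _ _ => measure_ne_top _ _) h

lemma setIntegral_le_mul_sub_of_monotone [IsFiniteMeasure μ] {X : Ω → ℝ} (hX : Measurable X)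
    {g : ℝ → ℝ} (hg : Monotone g) (hgi : Integrable (fun ω => g (X ω)) μ) {s t c : ℝ}
    (hgs : 0 ≤ g s) (hst : s ≤ t) (hc : 0 ≤ c)
    (h : μ.real {ω | X ω ≤ s} ≤ c * (μ.real {ω | X ω ≤ t} - μ.real {ω | X ω ≤ s})) :
    ∫ ω in {ω | X ω ≤ s}, g (X ω) ∂μ ≤
      c * (∫ ω in {ω | X ω ≤ t}, g (X ω) ∂μ - ∫ ω in {ω | X ω ≤ s}, g (X ω) ∂μ) := by
  set A := {ω | X ω ≤ s}
  set B := {ω | X ω ≤ t}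
  have hA : MeasurableSet A := hX measurableSet_Iic
  have hB : MeasurableSet B := hX measurableSet_Iic
  have hAB : A ⊆ B := fun ω hω => le_trans hω hst
  have hbelow : ∫ ω in A, g (X ω) ∂μ ≤ g s * μ.real A := by
    have := setIntegral_mono_on hgi.integrableOn (integrableOn_const (C := g s)) hA
      fun ω hω => hg hω
    rwa [setIntegral_const, smul_eq_mul, mul_comm] at this
  have habove : g s * μ.real (B \ A) ≤ ∫ ω in B \ A, g (X ω) ∂μ := by
    have := setIntegral_mono_on (integrableOn_const (C := g s)) hgi.integrableOn
      (hB.diff hA) fun ω hω => hg (le_of_not_ge hω.2)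
    rwa [setIntegral_const, smul_eq_mul, mul_comm] at this
  rw [measureReal_sdiff hAB hA, setIntegral_sdiff hA hgi.integrableOn hAB] at habove
  calc ∫ ω in A, g (X ω) ∂μ ≤ g s * μ.real A := hbelow
    _ ≤ g s * (c * (μ.real B - μ.real A)) := mul_le_mul_of_nonneg_left h hgs
    _ = c * (g s * (μ.real B - μ.real A)) := by ring
    _ ≤ _ := mul_le_mul_of_nonneg_left habove hc

lemma measureReal_inter_div_le_of_condExp [IsFiniteMeasure μ] {X : Ω → ℝ} (hX : Measurable X)
    {U : Set Ω} (hU : MeasurableSet U) {g : ℝ → ℝ} (hg : Monotone g)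
    (hUg : μ⟦U | MeasurableSpace.comap X inferInstance⟧ =ᵐ[μ] fun ω => g (X ω))
    {s t c : ℝ} (hst : s ≤ t) (hc : 0 < c)
    (h : μ.real {ω | X ω ≤ s} / c ≤ μ.real {ω | X ω ≤ t} / (c + 1)) :
    μ.real ({ω | X ω ≤ s} ∩ U) / c ≤ μ.real ({ω | X ω ≤ t} ∩ U) / (c + 1) := by
  have hm := hX.comap_le
  -- `g ≥ 0` holds only on the law of `X`; its positive part is still monotone and represents the
  -- same conditional probability
  set g' : ℝ → ℝ := fun r => max (g r) 0
  have hUg' : μ⟦U | MeasurableSpace.comap X inferInstance⟧ =ᵐ[μ] fun ω => g' (X ω) := by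
    filter_upwards [hUg, condExp_nonneg (m := MeasurableSpace.comap X inferInstance)
      (f := U.indicator fun _ => (1 : ℝ))
      (ae_of_all μ fun ω => Set.indicator_nonneg (fun _ _ => zero_le_one) ω)] with ω h1 h2
    rw [h1] at h2 ⊢
    exact (max_eq_left h2).symm
  have hmeas : ∀ r, μ.real ({ω | X ω ≤ r} ∩ U) = ∫ ω in {ω | X ω ≤ r}, g' (X ω) ∂μ := by
    intro r
    have hr : MeasurableSet[MeasurableSpace.comap X inferInstance] {ω | X ω ≤ r} :=
      ⟨Set.Iic r, measurableSet_Iic, rfl⟩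
    rw [← setIntegral_congr_ae (hm _ hr) (hUg'.mono fun ω hω _ => hω),
      setIntegral_condExp hm ((integrable_const 1).indicator hU) hr, setIntegral_indicator hU]
    simp
  rw [div_le_div_iff₀ hc (by linarith)] at h ⊢
  rw [hmeas, hmeas]
  have := setIntegral_le_mul_sub_of_monotone hX (hg.max monotone_const)
    (integrable_condExp.congr hUg') (le_max_right _ _) hst hc.le (by linarith)
  linarith

lemma sum_sub_le_of_le_succ {m : ℕ} (x y : Fin (m + 1) → ℝ) (h0 : 0 ≤ y 0)
    (h : ∀ j : Fin m, x j.castSucc ≤ y j.succ) : ∑ j, (x j - y j) ≤ x (Fin.last m) := by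
  induction m with
  | zero => simpa using h0
  | succ m ih =>
    rw [Fin.sum_univ_castSucc]
    have := ih (x ∘ Fin.castSucc) (y ∘ Fin.castSucc) h0 fun j => h j.castSucc
    have := h (Fin.last m)
    simp only [Function.comp_apply, Fin.succ_last] at *
    linarith

lemma one_sub_measureReal_eq_sum_sdiff [IsProbabilityMeasure μ] {n : ℕ} {U : ℕ → Set Ω}
    (hU : ∀ k, MeasurableSet (U k)) (hmono : Monotone U) (hn : U n = Set.univ) :
    1 - μ.real (U 0) = ∑ j : Fin n, μ.real (U (j + 1) \ U j) := by
  rw [Fin.sum_univ_eq_sum_range (fun k => μ.real (U (k + 1) \ U k)),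
    sum_congr rfl fun k _ => measureReal_sdiff (hmono (Nat.le_add_right k 1)) (hU k),
    sum_range_sub (fun k => μ.real (U k)), hn, probReal_univ]

lemma sum_measureReal_inter_sdiff_div_le [IsFiniteMeasure μ] {m : ℕ} {Y : Ω → ℝ}
    (hY : Measurable Y) {U : ℕ → Set Ω} (hU : ∀ k, MeasurableSet (U k)) (hmono : Monotone U)
    (hlast : U (m + 1) = Set.univ)
    (hcond : ∀ k, ∃ g : ℝ → ℝ, Monotone g ∧
      μ⟦U k | MeasurableSpace.comap Y inferInstance⟧ =ᵐ[μ] fun ω => g (Y ω))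
    {b : Fin (m + 1) → ℝ} (hb : Monotone b)
    (hratio : Monotone fun j : Fin (m + 1) => μ.real {ω | Y ω ≤ b j} / ((j : ℕ) + 1)) :
    ∑ j : Fin (m + 1), μ.real ({ω | Y ω ≤ b j} ∩ (U (j + 1) \ U j)) / ((j : ℕ) + 1)
      ≤ μ.real {ω | Y ω ≤ b (Fin.last m)} / (m + 1) := by
  set h : ℝ → ℕ → ℝ := fun s k => μ.real ({ω | Y ω ≤ s} ∩ U k)
  have hterm : ∀ j : Fin (m + 1),
      μ.real ({ω | Y ω ≤ b j} ∩ (U (j + 1) \ U j)) / ((j : ℕ) + 1)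
        = h (b j) (j + 1) / ((j : ℕ) + 1) - h (b j) j / ((j : ℕ) + 1) := fun j => by
    rw [Set.inter_sdiff_distrib_left, measureReal_sdiff
      (Set.inter_subset_inter_right {ω | Y ω ≤ b j} (hmono (Nat.le_add_right _ 1)))
      ((hY measurableSet_Iic).inter (hU j)), sub_div]
  rw [sum_congr rfl fun j _ => hterm j]
  calc _ ≤ h (b (Fin.last m)) (m + 1) / ((Fin.last m : ℕ) + 1) :=
        sum_sub_le_of_le_succ _ _ (div_nonneg measureReal_nonneg (by positivity)) fun j => ?_
    _ = _ := by simp [h, hlast]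
  obtain ⟨g, hg, hUg⟩ := hcond (j + 1)
  have hj := hratio (Fin.castSucc_le_succ j)
  simp only [Fin.val_castSucc, Fin.val_succ, Nat.cast_add, Nat.cast_one] at hj ⊢
  exact measureReal_inter_div_le_of_condExp hY (hU _) hg hUg (hb (Fin.castSucc_le_succ j))
    (by positivity) hj

lemma succ_mul_measureReal_sdiff_le_sum [IsFiniteMeasure μ] {n : ℕ} {Y : Ω → Fin n → ℝ}
    (hY : ∀ i, Measurable fun ω => Y ω i) (a : Fin n → ℝ) (j : Fin n) :
    ((j : ℕ) + 1 : ℝ) * μ.real (Y ⁻¹' simesSet a (j + 1) \ Y ⁻¹' simesSet a j)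
      ≤ ∑ i, μ.real ({ω | Y ω i ≤ a j} ∩ (Y ⁻¹' simesSet a (j + 1) \ Y ⁻¹' simesSet a j)) := by
  have := natCast_mul_measureReal_le_sum (μ := μ) (A := fun i => {ω | Y ω i ≤ a j})
    (fun i => hY i measurableSet_Iic) (m := j + 1) fun ω hω =>
      (lt_card_of_mem_simesSet_succ_sdiff a hω).trans_le
        (card_le_card fun i => by simpa using le_of_lt)
  exact_mod_cast this

lemma one_sub_measureReal_le_sum_sum_div [IsProbabilityMeasure μ] {n : ℕ} {Y : Ω → Fin n → ℝ}
    (hY : ∀ i, Measurable fun ω => Y ω i) (a : Fin n → ℝ) :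
    1 - μ.real (Y ⁻¹' simesSet a 0) ≤ ∑ i, ∑ j, μ.real ({ω | Y ω i ≤ a j} ∩
      (Y ⁻¹' simesSet a (j + 1) \ Y ⁻¹' simesSet a j)) / ((j : ℕ) + 1) := by
  rw [one_sub_measureReal_eq_sum_sdiff (n := n) (U := fun k => Y ⁻¹' simesSet a k)
    (fun k => measurable_pi_lambda _ hY (measurableSet_simesSet a k))
    (fun _ _ h => Set.preimage_mono (simesSet_mono a h)) (by simp [simesSet_of_le a le_rfl]),
    sum_comm]
  gcongr with j
  rw [← sum_div, le_div_iff₀ (by positivity), mul_comm]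
  exact succ_mul_measureReal_sdiff_le_sum hY a j

end Probability

/-- The Simes inequality (1.2) under the PDS condition: if for each `i` and every
bounded coordinatewise nondecreasing `φ` the conditional expectation
`E[φ(X_1, ..., X_n) | X_i]` is a nondecreasing function of `X_i`, the marginal CDFs
`F_i` are continuous, and `a_1 ≤ ⋯ ≤ a_n` are such that `F_i(a_j)/j` is nondecreasing
in `j` for each `i`, then
`P(X_{1:n} ≥ a_1, ..., X_{n:n} ≥ a_n) ≥ 1 − (1/n) Σ_i F_i(a_n)`. -/
theorem simes_inequality_PDS
    {Ω : Type*} [MeasurableSpace Ω] {μ : Measure Ω} [IsProbabilityMeasure μ]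
    {n : ℕ} (hn : 0 < n) (X : Fin n → Ω → ℝ) (hmeas : ∀ i, Measurable (X i))
    (hPDS : ∀ (i : Fin n) (φ : (Fin n → ℝ) → ℝ), Monotone φ →
      (∃ M, ∀ x, |φ x| ≤ M) →
      ∃ g : ℝ → ℝ, Monotone g ∧
        μ[(fun ω => φ (fun j => X j ω)) |
            MeasurableSpace.comap (X i) (inferInstance : MeasurableSpace ℝ)]
          =ᵐ[μ] fun ω => g (X i ω))
    (F : Fin n → ℝ → ℝ)
    (hcdf : ∀ i (t : ℝ), (μ {ω | X i ω ≤ t}).toReal = F i t)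
    (a : Fin n → ℝ) (ha : Monotone a)
    (hratio : ∀ (i : Fin n) (j j' : Fin n), j ≤ j' →
      F i (a j) / ((j : ℕ) + 1) ≤ F i (a j') / ((j' : ℕ) + 1)) :
    1 - (1 / (n : ℝ)) * ∑ i, F i (a ⟨n - 1, by omega⟩)
      ≤ (μ {ω | ∀ i : Fin n, a i ≤ ordStat (fun j => X j ω) i}).toReal := by
  obtain ⟨m, rfl⟩ : ∃ m, n = m + 1 := ⟨n - 1, by omega⟩
  set Y : Ω → Fin (m + 1) → ℝ := fun ω j => X j ω
  set G : ℕ → Set Ω := fun k => Y ⁻¹' simesSet a k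
  have hG : ∀ k, MeasurableSet (G k) :=
    fun k => measurable_pi_lambda _ hmeas (measurableSet_simesSet a k)
  have hGmono : Monotone G := fun _ _ h => Set.preimage_mono (simesSet_mono a h)
  have hGlast : G (m + 1) = Set.univ := by simp [G, simesSet_of_le a le_rfl]
  have hcond : ∀ i k, ∃ g : ℝ → ℝ, Monotone g ∧
      μ⟦G k | MeasurableSpace.comap (X i) inferInstance⟧ =ᵐ[μ] fun ω => g (X i ω) := by
    intro i k
    refine hPDS i _ (isUpperSet_simesSet a k).monotone_indicator_one ⟨1, fun x => ?_⟩
    by_cases hx : x ∈ simesSet a k <;> simp [hx]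
  have hcoord : ∀ i, ∑ j, μ.real ({ω | X i ω ≤ a j} ∩ (G (j + 1) \ G j)) / ((j : ℕ) + 1)
      ≤ F i (a (Fin.last m)) / (m + 1) := by
    intro i
    have := sum_measureReal_inter_sdiff_div_le (hmeas i) hG hGmono hGlast (hcond i) ha
      fun j j' hjj' => by simpa only [measureReal_def, hcdf] using hratio i j j' hjj'
    simpa only [measureReal_def, hcdf] using this
  have hgood : {ω | ∀ i, a i ≤ ordStat (fun j => X j ω) i} = G 0 := by
    ext ω
    simp [G, Y, simesSet]
  rw [← measureReal_def, hgood]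
  calc 1 - 1 / ((m + 1 : ℕ) : ℝ) * ∑ i, F i (a (Fin.last m))
      ≤ 1 - ∑ i, ∑ j, μ.real ({ω | X i ω ≤ a j} ∩ (G (j + 1) \ G j)) / ((j : ℕ) + 1) := by
        rw [mul_sum]
        gcongr with i
        simpa [div_eq_inv_mul] using hcoord i
    _ ≤ μ.real (G 0) := by linarith [one_sub_measureReal_le_sum_sum_div (μ := μ) hmeas a]
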